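/- Fix n and k with 1 ≤ k ≤ n-1, and let Γ_v := { (i,j) : i ≤ k < j ≤ n and v → v·(i,j) is a quantum edge in QB(S_n) }, for v ∈ S_n. Define (a,b) ⪯ (c,d) iff c ≤ a ≤ k < b ≤ d. Then Γ_v, whenever nonempty, has a unique maximum and a unique minimum with respect to ⪯. More specifically: if (p,q) and (r,s) belong to Γ_v with p < r ≤ k < q < s, then (p,s) and (r,q) also belong to Γ_v. -/

import Mathlib

/-!
Comparing inversion sets, for `i < j` one has `ℓ(v·(i,j)) - ℓ(v) = ±(1 + 2c)`, where `c`
counts the `l` with `i < l < j` whose value `v l` lies between `v i` and `v j`, and the sign is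
that of `v j - v i`. Hence the drop `2(j - i) - 1` of a quantum edge happens exactly when
`v j < v i` and all `j - i - 1` intermediate values lie strictly between them. For
`p < r ≤ k < q < s` this gives `v s < v q < v r < v p`, and the intervals of `(p,s)` and `(r,q)`
are covered by those of `(p,q)` and `(r,s)`, so `Γ_v` is closed under the crossing operation.
For a finite set closed under it, (least first coordinate, greatest second coordinate) is a
member, the `⪯`-maximum; dually for the minimum.
-/

open scoped Classical

noncomputable section

/-- The length (number of inversions) of a permutation in `S_n`. -/
def lenA {n : ℕ} (w : Equiv.Perm (Fin n)) : ℕ :=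
  (Finset.univ.filter (fun p : Fin n × Fin n => p.1 < p.2 ∧ w p.2 < w p.1)).card

/-- Bruhat edge `w → w·(i,j)` of the type `A_{n-1}` quantum Bruhat graph:
`ℓ(w·(i,j)) = ℓ(w) + 1`. -/
def bEdgeA {n : ℕ} (w : Equiv.Perm (Fin n)) (i j : Fin n) : Prop :=
  i < j ∧ lenA (w * Equiv.swap i j) = lenA w + 1

/-- Quantum edge `w → w·(i,j)`: `ℓ(w·(i,j)) = ℓ(w) + 1 - 2(j - i)`. -/
def qEdgeA {n : ℕ} (w : Equiv.Perm (Fin n)) (i j : Fin n) : Prop :=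
  i < j ∧ lenA (w * Equiv.swap i j) + 2 * ((j : ℕ) - (i : ℕ)) = lenA w + 1

/-- Edge of the quantum Bruhat graph `QB(S_n)` labeled by the transposition `(i,j)`. -/
def edgeA {n : ℕ} (w : Equiv.Perm (Fin n)) (i j : Fin n) : Prop :=
  bEdgeA w i j ∨ qEdgeA w i j

/-- `a ≺ b ≺ c` in the circular order on `{1,…,n}` starting at `a`. -/
def circB {n : ℕ} (a b c : Fin n) : Prop := b ≠ a ∧ b - a < c - a

/-- `a ≺ʳ b ≺ʳ c` in the reverse circular order on `{1,…,n}` starting at `a`. -/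
def circBR {n : ℕ} (a b c : Fin n) : Prop := b ≠ a ∧ a - b < a - c
/-- `mid k i j`: the (0-indexed) pair `(i,j)` corresponds to a 1-indexed pair
`(i+1, j+1)` with `i+1 ≤ k < j+1`. -/
def midA {n : ℕ} (k : ℕ) (i j : Fin n) : Prop := (i : ℕ) < k ∧ k ≤ (j : ℕ)

/-- The set `Γ_v` of pairs `(i,j)` with `i ≤ k < j` (1-indexed) such that
`v → v·(i,j)` is a quantum edge of `QB(S_n)`. -/
def GammaSet {n : ℕ} (k : ℕ) (v : Equiv.Perm (Fin n)) : Set (Fin n × Fin n) :=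
  {p | midA k p.1 p.2 ∧ qEdgeA v p.1 p.2}

/-- The partial order `(a,b) ⪯ (c,d) ↔ c ≤ a ≤ k < b ≤ d` (1-indexed). -/
def preA {n : ℕ} (k : ℕ) (p q : Fin n × Fin n) : Prop :=
  q.1 ≤ p.1 ∧ (p.1 : ℕ) < k ∧ k ≤ (p.2 : ℕ) ∧ p.2 ≤ q.2

/-- `m` is the maximum of `S` with respect to `⪯`. -/
def isMaxOf {n : ℕ} (k : ℕ) (S : Set (Fin n × Fin n)) (m : Fin n × Fin n) : Prop :=
  m ∈ S ∧ ∀ x ∈ S, preA k x m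

/-- `m` is the minimum of `S` with respect to `⪯`. -/
def isMinOf {n : ℕ} (k : ℕ) (S : Set (Fin n × Fin n)) (m : Fin n × Fin n) : Prop :=
  m ∈ S ∧ ∀ x ∈ S, preA k m x

/-- `QPathA k w L`: `L` is the list of labels of a directed path in `QB(S_n)`
starting at `w`, all of whose labels `(i,j)` satisfy `i ≤ k < j` (1-indexed) and all
of whose steps are quantum edges. -/
def QPathA {n : ℕ} (k : ℕ) : Equiv.Perm (Fin n) → List (Fin n × Fin n) → Prop
  | _, [] => True
  | w, p :: L => midA k p.1 p.2 ∧ qEdgeA w p.1 p.2 ∧ QPathA k (w * Equiv.swap p.1 p.2) L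

open Equiv Finset

section Order

variable {α β : Type*}

lemma ite_lt_add_ite_lt_le [LinearOrder α] (x y z : α) :
    (if z < x then 1 else 0) + (if y < z then 1 else 0) ≤
      (if z < y then 1 else 0) + (if x < z then 1 else 0) + 2 := by
  split_ifs <;> omega

lemma ite_lt_add_ite_lt_eq_iff [LinearOrder α] (x y z : α) :
    (if z < x then 1 else 0) + (if y < z then 1 else 0) =
        (if z < y then 1 else 0) + (if x < z then 1 else 0) + 2 ↔ y < z ∧ z < x := by
  constructor
  · intro h
    split_ifs at h with hzx hyz <;> first | omega | exact ⟨hyz, hzx⟩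
  · rintro ⟨hyz, hzx⟩
    rw [if_pos hzx, if_pos hyz, if_neg hyz.not_gt, if_neg hzx.not_gt]

def CrossingClosed [LT α] [LT β] (S : Set (α × β)) : Prop :=
  ∀ x y : α × β, x ∈ S → y ∈ S → x.1 < y.1 → x.2 < y.2 →
    (x.1, y.2) ∈ S ∧ (y.1, x.2) ∈ S

lemma CrossingClosed.mem_of_le [PartialOrder α] [PartialOrder β] {S : Set (α × β)}
    (hS : CrossingClosed S) {x y : α × β} (hx : x ∈ S) (hy : y ∈ S)
    (h1 : x.1 ≤ y.1) (h2 : x.2 ≤ y.2) : (x.1, y.2) ∈ S ∧ (y.1, x.2) ∈ S := by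
  obtain ⟨x₁, x₂⟩ := x
  obtain ⟨y₁, y₂⟩ := y
  rcases h1.eq_or_lt with rfl | h1
  · exact ⟨hy, hx⟩
  rcases h2.eq_or_lt with rfl | h2
  · exact ⟨hx, hy⟩
  exact hS _ _ hx hy h1 h2

end Order

variable {n : ℕ}

def inversions (u : Perm (Fin n)) : Finset (Fin n × Fin n) :=
  univ.filter fun p : Fin n × Fin n => p.1 < p.2 ∧ u p.2 < u p.1

lemma mem_inversions {u : Perm (Fin n)} {p : Fin n × Fin n} :
    p ∈ inversions u ↔ p.1 < p.2 ∧ u p.2 < u p.1 := by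
  simp [inversions]

lemma inversions_swap {i j : Fin n} (hij : i < j) :
    inversions (swap i j) =
      insert (i, j) ((Ioo i j).image (i, ·) ∪ (Ioo i j).image (·, j)) := by
  ext ⟨a, b⟩
  simp only [mem_inversions, mem_insert, mem_union, mem_image, mem_Ioo, Prod.mk.injEq,
    swap_apply_def, ← and_assoc, exists_and_right, exists_eq_right]
  rw [Fin.lt_def] at hij
  split_ifs <;> simp only [Fin.lt_def, Fin.ext_iff] at * <;> omega

lemma inversions_inter_inversions (u s : Perm (Fin n)) :
    inversions u ∩ inversions s = (inversions s).filter fun p => u p.2 < u p.1 := by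
  ext p
  simp only [mem_inter, mem_filter, mem_inversions]
  tauto

lemma card_inversions_mul_sdiff (w s : Perm (Fin n)) :
    #(inversions (w * s) \ inversions s) = #(inversions w \ inversions s⁻¹) := by
  refine card_equiv (s.prodCongr s) fun p => ?_
  simp only [mem_sdiff, mem_inversions, prodCongr_apply, Prod.map, Perm.mul_apply,
    Perm.coe_inv, symm_apply_apply, not_and, not_lt]
  constructor
  · rintro ⟨⟨hp, hw⟩, hs⟩
    exact ⟨⟨(hs hp).lt_of_ne (s.injective.ne hp.ne), hw⟩, fun _ => hp.le⟩
  · rintro ⟨⟨hp, hw⟩, hs⟩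
    have hlt := (hs hp).lt_of_ne (s.injective.ne_iff.mp hp.ne)
    exact ⟨⟨hlt, hw⟩, fun _ => hp.le⟩

lemma lenA_mul_add_card_inter (w s : Perm (Fin n)) :
    lenA (w * s) + #(inversions w ∩ inversions s⁻¹) =
      lenA w + #(inversions (w * s) ∩ inversions s) := by
  have hws := card_inter_add_card_sdiff (inversions (w * s)) (inversions s)
  have hw := card_inter_add_card_sdiff (inversions w) (inversions s⁻¹)
  have hsdiff := card_inversions_mul_sdiff w s
  change #(inversions (w * s)) + _ = #(inversions w) + _
  omega

lemma card_inter_inversions_swap (u : Perm (Fin n)) {i j : Fin n} (hij : i < j) :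
    #(inversions u ∩ inversions (swap i j)) = (if u j < u i then 1 else 0) +
      ∑ l ∈ Ioo i j, ((if u l < u i then 1 else 0) + (if u j < u l then 1 else 0)) := by
  have hdisj : Disjoint (((Ioo i j).filter fun l => u l < u i).image (i, ·))
      (((Ioo i j).filter fun l => u j < u l).image (·, j)) := by
    simp only [disjoint_left, mem_image, mem_filter, mem_Ioo]
    rintro _ ⟨l, -, rfl⟩ ⟨m, ⟨⟨him, -⟩, -⟩, hm⟩
    exact him.ne' (congrArg Prod.fst hm)
  have hij_notMem : (i, j) ∉ ((Ioo i j).filter fun l => u l < u i).image (i, ·) ∪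
      ((Ioo i j).filter fun l => u j < u l).image (·, j) := by
    simp only [mem_union, mem_image, mem_filter, mem_Ioo, Prod.mk.injEq]
    rintro (⟨l, ⟨⟨-, hlj⟩, -⟩, -, rfl⟩ | ⟨l, ⟨⟨hil, -⟩, -⟩, rfl, -⟩)
    exacts [lt_irrefl _ hlj, lt_irrefl _ hil]
  rw [inversions_inter_inversions, inversions_swap hij, filter_insert, filter_union,
    filter_image, filter_image, sum_add_distrib, ← card_filter, ← card_filter]
  split_ifs
  · rw [card_insert_of_notMem hij_notMem, card_union_of_disjoint hdisj,
      card_image_of_injective _ (Prod.mk_right_injective i),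
      card_image_of_injective _ (Prod.mk_left_injective j)]
    ring
  · rw [card_union_of_disjoint hdisj, card_image_of_injective _ (Prod.mk_right_injective i),
      card_image_of_injective _ (Prod.mk_left_injective j)]
    ring

lemma lenA_mul_swap_add {w : Perm (Fin n)} {i j : Fin n} (hij : i < j) :
    lenA (w * swap i j) + (if w j < w i then 1 else 0) +
        ∑ l ∈ Ioo i j, ((if w l < w i then 1 else 0) + (if w j < w l then 1 else 0)) =
      lenA w + (if w i < w j then 1 else 0) +
        ∑ l ∈ Ioo i j, ((if w l < w j then 1 else 0) + (if w i < w l then 1 else 0)) := by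
  have key := lenA_mul_add_card_inter w (swap i j)
  have hsum : ∑ l ∈ Ioo i j, ((if w (swap i j l) < w j then 1 else 0) +
        (if w i < w (swap i j l) then 1 else 0)) =
      ∑ l ∈ Ioo i j, ((if w l < w j then 1 else 0) + (if w i < w l then 1 else 0)) := by
    refine sum_congr rfl fun l hl => ?_
    rw [mem_Ioo] at hl
    rw [swap_apply_of_ne_of_ne hl.1.ne' hl.2.ne]
  rw [swap_inv, card_inter_inversions_swap _ hij, card_inter_inversions_swap _ hij] at key
  simp only [Perm.mul_apply, swap_apply_left, swap_apply_right, hsum] at key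
  omega

lemma qEdgeA_iff {v : Perm (Fin n)} {i j : Fin n} :
    qEdgeA v i j ↔ i < j ∧ v j < v i ∧ ∀ l ∈ Ioo i j, v j < v l ∧ v l < v i := by
  refine and_congr_right fun hij => ?_
  have hlen := lenA_mul_swap_add (w := v) hij
  set S := ∑ l ∈ Ioo i j, ((if v l < v i then 1 else 0) + (if v j < v l then 1 else 0))
  set S' := ∑ l ∈ Ioo i j, ((if v l < v j then 1 else 0) + (if v i < v l then 1 else 0))
  have hbound : S' + 2 * ((j : ℕ) - i - 1) =
      ∑ l ∈ Ioo i j, ((if v l < v j then 1 else 0) + (if v i < v l then 1 else 0) + 2) := by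
    rw [sum_add_distrib, sum_const, Fin.card_Ioo, smul_eq_mul, mul_comm]
  -- each `l` adds at most 2 more to `S` than to `S'`, and exactly 2 iff `v j < v l < v i`
  have hle : S ≤ S' + 2 * ((j : ℕ) - i - 1) :=
    hbound ▸ sum_le_sum fun l _ => ite_lt_add_ite_lt_le _ _ _
  have heq : S = S' + 2 * ((j : ℕ) - i - 1) ↔ ∀ l ∈ Ioo i j, v j < v l ∧ v l < v i := by
    rw [hbound, sum_eq_sum_iff_of_le fun l _ => ite_lt_add_ite_lt_le _ _ _]
    exact forall₂_congr fun l _ => ite_lt_add_ite_lt_eq_iff _ _ _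
  have hij' : (i : ℕ) < j := hij
  by_cases hd : v j < v i
  · rw [if_pos hd, if_neg hd.not_gt] at hlen
    rw [← heq]
    simp only [hd, true_and]
    omega
  · rw [if_neg hd] at hlen
    simp only [hd, false_and, iff_false]
    split_ifs at hlen <;> omega

lemma gammaSet_crossingClosed (k : ℕ) (v : Perm (Fin n)) : CrossingClosed (GammaSet k v) := by
  rintro ⟨p, q⟩ ⟨r, s⟩ ⟨⟨hp, hq⟩, hpq⟩ ⟨⟨hr, hs⟩, hrs⟩ (hpr : p < r) (hqs : q < s)
  obtain ⟨hpq, -, hP⟩ := qEdgeA_iff.1 hpq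
  obtain ⟨-, -, hR⟩ := qEdgeA_iff.1 hrs
  have hrq : r < q := Fin.lt_def.2 (hr.trans_le hq)
  have hr_mid := hP r (mem_Ioo.2 ⟨hpr, hrq⟩)
  have hq_mid := hR q (mem_Ioo.2 ⟨hrq, hqs⟩)
  refine ⟨⟨⟨hp, hs⟩, qEdgeA_iff.2 ⟨hpq.trans hqs, ?_, fun l hl => ?_⟩⟩,
    ⟨⟨hr, hq⟩, qEdgeA_iff.2 ⟨hrq, hr_mid.1, fun l hl => ?_⟩⟩⟩
  · exact hq_mid.1.trans (hr_mid.1.trans hr_mid.2)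
  · rw [mem_Ioo] at hl
    rcases le_or_gt l r with hlr | hrl
    · have hl_mid := hP l (mem_Ioo.2 ⟨hl.1, hlr.trans_lt hrq⟩)
      exact ⟨hq_mid.1.trans hl_mid.1, hl_mid.2⟩
    · have hl_mid := hR l (mem_Ioo.2 ⟨hrl, hl.2⟩)
      exact ⟨hl_mid.1, hl_mid.2.trans hr_mid.2⟩
  · rw [mem_Ioo] at hl
    exact ⟨(hP l (mem_Ioo.2 ⟨hpr.trans hl.1, hl.2⟩)).1,
      (hR l (mem_Ioo.2 ⟨hl.1, hl.2.trans hqs⟩)).2⟩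

section Extrema

variable {k : ℕ} {S : Set (Fin n × Fin n)}

lemma preA_antisymm {p q : Fin n × Fin n} (hpq : preA k p q) (hqp : preA k q p) : p = q :=
  Prod.ext (le_antisymm hqp.1 hpq.1) (le_antisymm hpq.2.2.2 hqp.2.2.2)

lemma isMaxOf_unique {m m' : Fin n × Fin n} (hm : isMaxOf k S m) (hm' : isMaxOf k S m') :
    m = m' :=
  preA_antisymm (hm'.2 m hm.1) (hm.2 m' hm'.1)

lemma isMinOf_unique {m m' : Fin n × Fin n} (hm : isMinOf k S m) (hm' : isMinOf k S m') :
    m = m' :=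
  preA_antisymm (hm.2 m' hm'.1) (hm'.2 m hm.1)

lemma exists_isMaxOf (hmid : ∀ p ∈ S, midA k p.1 p.2) (hS : CrossingClosed S)
    (hne : S.Nonempty) : ∃ m, isMaxOf k S m := by
  obtain ⟨a, ha, ha_min⟩ := S.exists_min_image Prod.fst S.toFinite hne
  obtain ⟨b, hb, hb_max⟩ := S.exists_max_image Prod.snd S.toFinite hne
  exact ⟨(a.1, b.2), (hS.mem_of_le ha hb (ha_min b hb) (hb_max a ha)).1,
    fun x hx => ⟨ha_min x hx, (hmid x hx).1, (hmid x hx).2, hb_max x hx⟩⟩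

lemma exists_isMinOf (hmid : ∀ p ∈ S, midA k p.1 p.2) (hS : CrossingClosed S)
    (hne : S.Nonempty) : ∃ m, isMinOf k S m := by
  obtain ⟨a, ha, ha_max⟩ := S.exists_max_image Prod.fst S.toFinite hne
  obtain ⟨b, hb, hb_min⟩ := S.exists_min_image Prod.snd S.toFinite hne
  exact ⟨(a.1, b.2), (hS.mem_of_le hb ha (ha_max b hb) (hb_min a ha)).2,
    fun x hx => ⟨ha_max x hx, (hmid a ha).1, (hmid b hb).2, hb_min x hx⟩⟩

end Extrema

theorem stmt8_general {n k : ℕ} (v : Equiv.Perm (Fin n)) :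
    ((GammaSet k v).Nonempty →
      (∃! m : Fin n × Fin n, isMaxOf k (GammaSet k v) m) ∧
      (∃! m : Fin n × Fin n, isMinOf k (GammaSet k v) m)) ∧
    (∀ x y : Fin n × Fin n, x ∈ GammaSet k v → y ∈ GammaSet k v →
      x.1 < y.1 → x.2 < y.2 → (x.1, y.2) ∈ GammaSet k v ∧ (y.1, x.2) ∈ GammaSet k v) := by
  have hmid : ∀ p ∈ GammaSet k v, midA k p.1 p.2 := fun _ hp => hp.1
  have hS := gammaSet_crossingClosed k v
  refine ⟨fun hne => ⟨?_, ?_⟩, hS⟩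
  · obtain ⟨m, hm⟩ := exists_isMaxOf hmid hS hne
    exact ⟨m, hm, fun m' hm' => isMaxOf_unique hm' hm⟩
  · obtain ⟨m, hm⟩ := exists_isMinOf hmid hS hne
    exact ⟨m, hm, fun m' hm' => isMinOf_unique hm' hm⟩

/-- The set `Γ_v` of quantum-edge labels `(i,j)` with `i ≤ k < j`
is closed under the operation `(p,q),(r,s) ↦ (p,s),(r,q)` for `p < r ≤ k < q < s`,
and (when nonempty) has a unique maximum and a unique minimum with respect to `⪯`. -/
theorem stmt8 {n k : ℕ} (hk1 : 1 ≤ k) (hk2 : k ≤ n - 1) (v : Equiv.Perm (Fin n)) :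
    ((GammaSet k v).Nonempty →
      (∃! m : Fin n × Fin n, isMaxOf k (GammaSet k v) m) ∧
      (∃! m : Fin n × Fin n, isMinOf k (GammaSet k v) m)) ∧
    (∀ x y : Fin n × Fin n, x ∈ GammaSet k v → y ∈ GammaSet k v →
      x.1 < y.1 → x.2 < y.2 → (x.1, y.2) ∈ GammaSet k v ∧ (y.1, x.2) ∈ GammaSet k v) :=
  stmt8_general v
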